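/- Let d ≥ 1 and R > 0. Then for all n > 0 and all r₁, r₂ with 0 ≤ r₁ ≤ r₂ ≤ R, the integral ∫_{W_n} ∫_{ℝ^d} ∫_{ℝ^d} ∫_{ℝ^d} 1{r₁ < |x − y| ≤ r₂} · 1{r₁ < |u − v| ≤ r₂} · min(|y − u|^{−(d+1)}, 1) dx dv du dy is at most (d κ_d R^{d−1})² · (d+1) κ_d · n · (r₂ − r₁)². -/

import Mathlib

open MeasureTheory
open scoped ENNReal

open Metric Set Real

/-- `κ_d = π^(d/2) / Γ(1 + d/2)`, the volume of the `d`-dimensional unit ball. -/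
noncomputable def unitBallVol (d : ℕ) : ℝ :=
  Real.pi ^ ((d : ℝ) / 2) / Real.Gamma (1 + (d : ℝ) / 2)

/-- The cube `W_n = [-n^(1/d)/2, n^(1/d)/2]^d` of volume `n` in `ℝ^d`. -/
def cubeW (d : ℕ) (n : ℝ) : Set (EuclideanSpace ℝ (Fin d)) :=
  {x | ∀ i, |x i| ≤ n ^ ((1 : ℝ) / d) / 2}

lemma unitBallVol_pos (d : ℕ) : 0 < unitBallVol d := by
  unfold unitBallVol
  apply div_pos
  · exact Real.rpow_pos_of_pos Real.pi_pos _
  · exact Real.Gamma_pos_of_pos (by positivity)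

lemma vol_closedBall {d : ℕ} (hd : 1 ≤ d) (y : EuclideanSpace ℝ (Fin d)) (r : ℝ) :
    volume (Metric.closedBall y r) = ENNReal.ofReal r ^ d * ENNReal.ofReal (unitBallVol d) := by
  haveI : Nonempty (Fin d) := ⟨⟨0, hd⟩⟩
  rw [EuclideanSpace.volume_closedBall]
  congr 1
  · rw [Fintype.card_fin]
  · congr 1
    rw [Fintype.card_fin]
    unfold unitBallVol
    rw [add_comm (1 : ℝ)]
    congr 1
    rw [Real.sqrt_eq_rpow, ← Real.rpow_natCast (Real.pi ^ ((1:ℝ)/2)) d,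
      ← Real.rpow_mul Real.pi_pos.le]
    ring_nf

lemma pow_sub_pow_le_aux {R r₁ r₂ : ℝ} (hR : 0 < R) (h1 : 0 ≤ r₁) (h12 : r₁ ≤ r₂)
    (h2R : r₂ ≤ R) (d : ℕ) : r₂ ^ d - r₁ ^ d ≤ d * R ^ (d - 1) * (r₂ - r₁) := by
  have h2 : 0 ≤ r₂ := h1.trans h12
  have h1R : r₁ ≤ R := h12.trans h2R
  rw [← geom_sum₂_mul r₂ r₁ d]
  apply mul_le_mul_of_nonneg_right _ (sub_nonneg.2 h12)
  calc ∑ i ∈ Finset.range d, r₂ ^ i * r₁ ^ (d - 1 - i)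
      ≤ (Finset.range d).card • R ^ (d - 1) := by
        apply Finset.sum_le_card_nsmul
        intro i hi
        have hi' : i ≤ d - 1 := Nat.le_sub_one_of_lt (Finset.mem_range.1 hi)
        calc r₂ ^ i * r₁ ^ (d - 1 - i) ≤ R ^ i * R ^ (d - 1 - i) := by
              apply mul_le_mul (pow_le_pow_left₀ h2 h2R i) (pow_le_pow_left₀ h1 h1R _)
                (by positivity) (by positivity)
          _ = R ^ (d - 1) := by rw [← pow_add, Nat.add_sub_cancel' hi']
    _ = d * R ^ (d - 1) := by rw [Finset.card_range, nsmul_eq_mul]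

lemma vol_annulus {d : ℕ} (hd : 1 ≤ d) {R : ℝ} (hR : 0 < R) {r₁ r₂ : ℝ} (h1 : 0 ≤ r₁)
    (h12 : r₁ ≤ r₂) (h2R : r₂ ≤ R) (y : EuclideanSpace ℝ (Fin d)) :
    volume {x : EuclideanSpace ℝ (Fin d) | r₁ < dist x y ∧ dist x y ≤ r₂}
      ≤ ENNReal.ofReal (d * unitBallVol d * R ^ (d - 1) * (r₂ - r₁)) := by
  have h2 : 0 ≤ r₂ := h1.trans h12
  have hset : {x : EuclideanSpace ℝ (Fin d) | r₁ < dist x y ∧ dist x y ≤ r₂}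
      = Metric.closedBall y r₂ \ Metric.closedBall y r₁ := by
    ext x
    simp only [Set.mem_setOf_eq, Set.mem_diff, Metric.mem_closedBall, not_le]
    tauto
  rw [hset, measure_diff (Metric.closedBall_subset_closedBall h12)
    measurableSet_closedBall.nullMeasurableSet measure_closedBall_lt_top.ne,
    vol_closedBall hd, vol_closedBall hd, ← ENNReal.ofReal_pow h2, ← ENNReal.ofReal_pow h1,
    ← ENNReal.ofReal_mul (by positivity), ← ENNReal.ofReal_mul (by positivity),
    ← ENNReal.ofReal_sub _ (mul_nonneg (pow_nonneg h1 d) (unitBallVol_pos d).le)]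
  apply ENNReal.ofReal_le_ofReal
  have hk := (unitBallVol_pos d).le
  have := pow_sub_pow_le_aux hR h1 h12 h2R d
  calc r₂ ^ d * unitBallVol d - r₁ ^ d * unitBallVol d
      = (r₂ ^ d - r₁ ^ d) * unitBallVol d := by ring
    _ ≤ (d * R ^ (d - 1) * (r₂ - r₁)) * unitBallVol d := by
        apply mul_le_mul_of_nonneg_right this hk
    _ = d * unitBallVol d * R ^ (d - 1) * (r₂ - r₁) := by ring

lemma lintegral_min_rpow {d : ℕ} (hd : 1 ≤ d) :
    (∫⁻ z : EuclideanSpace ℝ (Fin d), min ((‖z‖₊ : ℝ≥0∞) ^ (-((d : ℝ) + 1))) 1)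
      ≤ ENNReal.ofReal (((d : ℝ) + 1) * unitBallVol d) := by
  haveI : Nonempty (Fin d) := ⟨⟨0, hd⟩⟩
  set p : ℝ := (d : ℝ) + 1 with hp
  have hp0 : 0 < p := by positivity
  set g : ℝ → ℝ := fun s => min (s ^ (-p)) 1 with hg
  have hae : (fun z : EuclideanSpace ℝ (Fin d) => min ((‖z‖₊ : ℝ≥0∞) ^ (-p)) 1)
      =ᵐ[volume] fun z => ENNReal.ofReal (g ‖z‖) := by
    filter_upwards [compl_mem_ae_iff.2 (measure_singleton (0 : EuclideanSpace ℝ (Fin d)))]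
      with z hz
    have hz' : 0 < ‖z‖ := norm_pos_iff.2 hz
    rw [hg]
    simp only
    rw [← enorm_eq_nnnorm, ← ofReal_norm, ENNReal.ofReal_rpow_of_pos hz',
      ← ENNReal.ofReal_one]
    exact (Monotone.map_min (fun _ _ h => ENNReal.ofReal_le_ofReal h)).symm
  rw [lintegral_congr_ae hae]
  have hg_nn : 0 ≤ᵐ[(volume : Measure (EuclideanSpace ℝ (Fin d)))] fun z => g ‖z‖ := by
    refine ae_of_all _ fun z => ?_
    exact le_min (rpow_nonneg (norm_nonneg z) _) zero_le_one
  have hg_meas : AEMeasurable (fun z : EuclideanSpace ℝ (Fin d) => g ‖z‖) volume := by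
    apply Measurable.aemeasurable
    fun_prop
  rw [lintegral_eq_lintegral_meas_le volume hg_nn hg_meas]
  rw [← Ioc_union_Ioi_eq_Ioi (zero_le_one' ℝ),
    lintegral_union measurableSet_Ioi (Ioc_disjoint_Ioi le_rfl)]
  have htail : (∫⁻ t in Ioi (1 : ℝ),
      volume {z : EuclideanSpace ℝ (Fin d) | t ≤ g ‖z‖}) = 0 := by
    rw [setLIntegral_congr_fun_ae measurableSet_Ioi (ae_of_all _
      (fun t (ht : 1 < t) => ?_)), lintegral_zero]
    have : {z : EuclideanSpace ℝ (Fin d) | t ≤ g ‖z‖} = ∅ := by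
      ext z
      simp only [mem_setOf_eq, mem_empty_iff_false, iff_false, not_le]
      exact lt_of_le_of_lt (min_le_right _ _) ht
    rw [this, measure_empty]
  rw [htail, add_zero]
  set q : ℝ := -((d : ℝ) / p) with hq
  have hq1 : -1 < q := by
    rw [hq, neg_lt, neg_neg]
    rw [div_lt_one hp0, hp]
    linarith
  have hkey : ∀ t ∈ Ioc (0 : ℝ) 1, volume {z : EuclideanSpace ℝ (Fin d) | t ≤ g ‖z‖}
      = ENNReal.ofReal (t ^ q) * ENNReal.ofReal (unitBallVol d) := by
    intro t ht
    have ht0 : 0 < t := ht.1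
    have hset : {z : EuclideanSpace ℝ (Fin d) | t ≤ g ‖z‖}
        = Metric.closedBall 0 (t ^ (-p)⁻¹) \ {0} := by
      ext z
      simp only [mem_setOf_eq, mem_diff, mem_closedBall_zero_iff, mem_singleton_iff]
      constructor
      · intro h
        have h1 : t ≤ ‖z‖ ^ (-p) := le_trans h (min_le_left _ _)
        have hz : z ≠ 0 := by
          rintro rfl
          rw [norm_zero, Real.zero_rpow (neg_ne_zero.2 hp0.ne')] at h1
          · exact absurd (lt_of_lt_of_le ht0 h1) (lt_irrefl 0)
        have hz' : 0 < ‖z‖ := norm_pos_iff.2 hz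
        exact ⟨(Real.le_rpow_inv_iff_of_neg hz' ht0 (by linarith)).2 h1, hz⟩
      · rintro ⟨hle, hz⟩
        have hz' : 0 < ‖z‖ := norm_pos_iff.2 hz
        refine le_min ((Real.le_rpow_inv_iff_of_neg hz' ht0 (by linarith)).1 hle) ht.2
    rw [hset, measure_diff_null (measure_singleton _), vol_closedBall hd,
      ← ENNReal.ofReal_pow (by positivity), ← Real.rpow_natCast (t ^ (-p)⁻¹) d,
      ← Real.rpow_mul ht0.le]
    have hexp : (-p)⁻¹ * (d : ℝ) = q := by rw [hq, ← neg_inv, neg_mul, inv_mul_eq_div]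
    rw [hexp]
  rw [setLIntegral_congr_fun_ae measurableSet_Ioc (ae_of_all _ hkey),
    lintegral_mul_const' _ _ ENNReal.ofReal_ne_top]
  have hInt : IntegrableOn (fun t : ℝ => t ^ q) (Ioc (0 : ℝ) 1) volume := by
    rw [← intervalIntegrable_iff_integrableOn_Ioc_of_le zero_le_one]
    exact intervalIntegral.intervalIntegrable_rpow' hq1
  rw [← ofReal_integral_eq_lintegral_ofReal hInt
    ((ae_restrict_iff' measurableSet_Ioc).2 (ae_of_all _ fun t ht => rpow_nonneg ht.1.le q))]
  have hq2 : 0 < q + 1 := by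
    rw [hq]
    have : (d : ℝ) / p < 1 := by rw [div_lt_one hp0, hp]; linarith
    linarith
  have hval : (∫ t in Ioc (0 : ℝ) 1, t ^ q) = p := by
    rw [← intervalIntegral.integral_of_le zero_le_one, integral_rpow (Or.inl hq1),
      Real.one_rpow, Real.zero_rpow hq2.ne', sub_zero, hq, hp]
    have h0 : (d : ℝ) + 1 ≠ 0 := by positivity
    field_simp
    ring
  rw [hval, ← ENNReal.ofReal_mul hp0.le]

lemma vol_cubeW {d : ℕ} (hd : 1 ≤ d) {n : ℝ} (hn : 0 < n) :
    volume (cubeW d n) = ENNReal.ofReal n := by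
  haveI : Nonempty (Fin d) := ⟨⟨0, hd⟩⟩
  set a : ℝ := n ^ ((1 : ℝ) / d) / 2 with ha
  have ha0 : 0 ≤ a := by positivity
  have hset : cubeW d n = (MeasurableEquiv.toLp 2 (Fin d → ℝ)).symm ⁻¹'
      (Set.univ.pi fun _ : Fin d => Icc (-a) a) := by
    ext x
    simp only [cubeW, mem_setOf_eq, mem_preimage, mem_pi, mem_univ, forall_true_left,
      mem_Icc, MeasurableEquiv.coe_toLp_symm]
    constructor
    · intro h i; exact abs_le.1 (h i)
    · intro h i; exact abs_le.2 (h i)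
  rw [hset, (EuclideanSpace.volume_preserving_symm_measurableEquiv_toLp (Fin d)).measure_preimage
    (MeasurableSet.univ_pi fun _ => measurableSet_Icc).nullMeasurableSet,
    volume_pi_pi, Real.volume_Icc]
  have h2a : a - -a = n ^ ((1 : ℝ) / d) := by rw [ha]; ring
  rw [h2a, Finset.prod_const, Finset.card_univ, Fintype.card_fin,
    ← ENNReal.ofReal_pow (by positivity), ← Real.rpow_natCast (n ^ ((1:ℝ)/d)) d,
    ← Real.rpow_mul hn.le, one_div, inv_mul_cancel₀ (Nat.cast_ne_zero.2 (by omega) : (d:ℝ) ≠ 0),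
    Real.rpow_one]

lemma annulus_measurableSet {d : ℕ} {r₁ r₂ : ℝ} (y : EuclideanSpace ℝ (Fin d)) :
    MeasurableSet {x : EuclideanSpace ℝ (Fin d) | r₁ < dist x y ∧ dist x y ≤ r₂} := by
  have hm : Measurable fun x : EuclideanSpace ℝ (Fin d) => dist x y :=
    measurable_id.dist measurable_const
  exact (measurableSet_lt measurable_const hm).inter (measurableSet_le hm measurable_const)

theorem stmt10 {d : ℕ} (hd : 1 ≤ d) (R : ℝ) (hR : 0 < R) (n r₁ r₂ : ℝ) (hn : 0 < n)
    (h1 : 0 ≤ r₁) (h12 : r₁ ≤ r₂) (h2R : r₂ ≤ R) :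
    (∫⁻ y in cubeW d n, ∫⁻ u : EuclideanSpace ℝ (Fin d),
        ∫⁻ v : EuclideanSpace ℝ (Fin d), ∫⁻ x : EuclideanSpace ℝ (Fin d),
          (if r₁ < dist x y ∧ dist x y ≤ r₂ then (1 : ℝ≥0∞) else 0) *
            (if r₁ < dist u v ∧ dist u v ≤ r₂ then (1 : ℝ≥0∞) else 0) *
            min (edist y u ^ (-((d : ℝ) + 1))) 1)
      ≤ ENNReal.ofReal
          ((d * unitBallVol d * R ^ (d - 1)) ^ 2 * (((d : ℝ) + 1) * unitBallVol d) * n *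
            (r₂ - r₁) ^ 2) := by
  set E := EuclideanSpace ℝ (Fin d)
  set a : ℝ := d * unitBallVol d * R ^ (d - 1) * (r₂ - r₁) with ha
  set b : ℝ := ((d : ℝ) + 1) * unitBallVol d with hb
  have hk := (unitBallVol_pos d).le
  have ha0 : 0 ≤ a := by
    refine mul_nonneg (mul_nonneg (mul_nonneg (by positivity) hk) (by positivity))
      (sub_nonneg.2 h12)
  have hb0 : 0 ≤ b := mul_nonneg (by positivity) hk
  set A : ℝ≥0∞ := ENNReal.ofReal a with hA
  set B : ℝ≥0∞ := ENNReal.ofReal b with hB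
  set M : E → E → ℝ≥0∞ := fun y u => min (edist y u ^ (-((d : ℝ) + 1))) 1 with hM
  have hM1 : ∀ y u, M y u ≤ 1 := fun y u => min_le_right _ _
  have hAtop : A ≠ ∞ := ENNReal.ofReal_ne_top
  have hvolann : ∀ y : E, volume {x : E | r₁ < dist x y ∧ dist x y ≤ r₂} ≤ A :=
    fun y => vol_annulus hd hR h1 h12 h2R y
  have hind : ∀ (y : E) (c : ℝ≥0∞), c ≠ ∞ →
      (∫⁻ x : E, (if r₁ < dist x y ∧ dist x y ≤ r₂ then (1 : ℝ≥0∞) else 0) * c)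
        ≤ A * c := by
    intro y c hc
    have heq : (fun x : E => (if r₁ < dist x y ∧ dist x y ≤ r₂ then (1 : ℝ≥0∞) else 0) * c)
        = fun x : E => ({x : E | r₁ < dist x y ∧ dist x y ≤ r₂}).indicator 1 x * c := by
      funext x
      by_cases hx : r₁ < dist x y ∧ dist x y ≤ r₂ <;>
        simp [Set.indicator, hx]
    rw [heq, lintegral_mul_const' c _ hc, lintegral_indicator_one (annulus_measurableSet y)]
    exact mul_le_mul_left (hvolann y) c
  calc (∫⁻ y in cubeW d n, ∫⁻ u : E, ∫⁻ v : E, ∫⁻ x : E,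
        (if r₁ < dist x y ∧ dist x y ≤ r₂ then (1 : ℝ≥0∞) else 0) *
          (if r₁ < dist u v ∧ dist u v ≤ r₂ then (1 : ℝ≥0∞) else 0) * M y u)
      ≤ ∫⁻ y in cubeW d n, ∫⁻ u : E, ∫⁻ v : E,
          A * ((if r₁ < dist u v ∧ dist u v ≤ r₂ then (1 : ℝ≥0∞) else 0) * M y u) := by
        refine lintegral_mono fun y => lintegral_mono fun u => lintegral_mono fun v => ?_
        have hif : (if r₁ < dist u v ∧ dist u v ≤ r₂ then (1 : ℝ≥0∞) else 0) ≤ 1 := by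
          split <;> simp
        have hle1 : ((if r₁ < dist u v ∧ dist u v ≤ r₂ then (1 : ℝ≥0∞) else 0) * M y u) ≤ 1 := by
          calc _ ≤ 1 * 1 := mul_le_mul' hif (hM1 y u)
            _ = 1 := one_mul 1
        have hc : ((if r₁ < dist u v ∧ dist u v ≤ r₂ then (1 : ℝ≥0∞) else 0) * M y u) ≠ ∞ :=
          ne_top_of_le_ne_top ENNReal.one_ne_top hle1
        refine le_trans (le_of_eq ?_) (hind y _ hc)
        congr 1
        funext x
        ring
      _ ≤ ∫⁻ y in cubeW d n, ∫⁻ u : E, A * (A * M y u) := by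
        refine lintegral_mono fun y => lintegral_mono fun u => ?_
        have hMtop : M y u ≠ ∞ := ne_top_of_le_ne_top ENNReal.one_ne_top (hM1 y u)
        rw [lintegral_const_mul' A _ hAtop]
        refine mul_le_mul_right ?_ A
        have heq2 : (fun v : E => (if r₁ < dist u v ∧ dist u v ≤ r₂ then (1 : ℝ≥0∞) else 0)
            * M y u) = fun v : E => (if r₁ < dist v u ∧ dist v u ≤ r₂ then (1 : ℝ≥0∞) else 0)
            * M y u := by
          funext v; rw [dist_comm u v]
        rw [heq2]
        exact hind u (M y u) hMtop
      _ ≤ ∫⁻ y in cubeW d n, A * (A * B) := by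
        refine lintegral_mono fun y => ?_
        rw [lintegral_const_mul' A _ hAtop, lintegral_const_mul' A _ hAtop]
        refine mul_le_mul_right (mul_le_mul_right ?_ A) A
        have heq3 : (fun u : E => M y u)
            = fun u : E => min ((‖u - y‖₊ : ℝ≥0∞) ^ (-((d : ℝ) + 1))) 1 := by
          funext u
          rw [hM]
          simp only
          rw [edist_comm, edist_eq_enorm_sub, enorm_eq_nnnorm]
        rw [heq3]
        rw [lintegral_sub_right_eq_self
          (fun z : E => min ((‖z‖₊ : ℝ≥0∞) ^ (-((d : ℝ) + 1))) 1) y]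
        exact lintegral_min_rpow hd
      _ = A * (A * B) * ENNReal.ofReal n := by
        rw [setLIntegral_const, vol_cubeW hd hn]
      _ = ENNReal.ofReal (a * (a * b) * n) := by
        rw [ENNReal.ofReal_mul (by positivity), ENNReal.ofReal_mul ha0,
          ENNReal.ofReal_mul ha0]
      _ = ENNReal.ofReal ((↑d * unitBallVol d * R ^ (d - 1)) ^ 2 *
          (((d : ℝ) + 1) * unitBallVol d) * n * (r₂ - r₁) ^ 2) := by
        congr 1
        rw [ha, hb]; ring
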